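/- Let $u$ solve $u' = 2e^{u/m}(u-m)$, $u(0)=R_0^2 > m$, on $[0,\delta)$. Then for all $t \in [0,\delta)$, $0 < e^{-u(t)/m} \leq e^{-R_0^2/m} - \frac{2(R_0^2-m)}{m}t$; in particular $\delta \leq \frac{m}{2(R_0^2-m)}e^{-R_0^2/m}$ and $u(t) \geq -m\log\big(e^{-R_0^2/m} - \frac{2(R_0^2-m)}{m}t\big)$. -/

import Mathlib

open Real Set

/-! Along the flow, `w = e^{-u/m}` satisfies `w' = -2(u - m)/m`. Since `u' > 0`, `u` increases from
`R₀²`, so `w' ≤ -2(R₀² - m)/m` and `w` lies below the line `e^{-R₀²/m} - 2(R₀² - m)t/m`. As `w > 0`,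
this line stays positive on `[0, δ)`, which bounds `δ`; taking logarithms bounds `u` from below. -/

theorem Convex.monotoneOn_of_hasDerivAt_nonneg {D : Set ℝ} (hD : Convex ℝ D) {f f' : ℝ → ℝ}
    (hf : ∀ x ∈ D, HasDerivAt f (f' x) x) (hf'₀ : ∀ x ∈ D, 0 ≤ f' x) : MonotoneOn f D :=
  monotoneOn_of_hasDerivWithinAt_nonneg hD
    (fun x hx ↦ (hf x hx).continuousAt.continuousWithinAt)
    (fun x hx ↦ (hf x (interior_subset hx)).hasDerivWithinAt)
    (fun x hx ↦ hf'₀ x (interior_subset hx))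

theorem Convex.image_sub_le_mul_sub_of_hasDerivAt_le {D : Set ℝ} (hD : Convex ℝ D)
    {f f' : ℝ → ℝ} {C : ℝ} (hf : ∀ x ∈ D, HasDerivAt f (f' x) x) (hf'C : ∀ x ∈ D, f' x ≤ C)
    {x y : ℝ} (hx : x ∈ D) (hy : y ∈ D) (hxy : x ≤ y) : f y - f x ≤ C * (y - x) :=
  hD.image_sub_le_mul_sub_of_deriv_le
    (fun z hz ↦ (hf z hz).continuousAt.continuousWithinAt)
    (fun z hz ↦ (hf z (interior_subset hz)).differentiableAt.differentiableWithinAt)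
    (fun z hz ↦ (hf z (interior_subset hz)).deriv ▸ hf'C z (interior_subset hz)) x hx y hy hxy

section Flow

variable {m R δ : ℝ} {u : ℝ → ℝ}

theorem hasDerivAt_exp_neg_div_of_flow {t : ℝ} (hm : m ≠ 0)
    (hode : HasDerivAt u (2 * exp (u t / m) * (u t - m)) t) :
    HasDerivAt (fun s ↦ exp (-u s / m)) (-(2 * (u t - m) / m)) t := by
  convert (hode.fun_neg.div_const m).exp using 1
  rw [neg_div, exp_neg]
  field_simp

theorem monotoneOn_of_flow (hrange : ∀ t ∈ Ico (0 : ℝ) δ, m < u t)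
    (hode : ∀ t ∈ Ico (0 : ℝ) δ, HasDerivAt u (2 * exp (u t / m) * (u t - m)) t) :
    MonotoneOn u (Ico 0 δ) :=
  (convex_Ico 0 δ).monotoneOn_of_hasDerivAt_nonneg hode fun t ht ↦ by
    have : 0 ≤ u t - m := sub_nonneg.2 (hrange t ht).le
    positivity

theorem exp_neg_div_le_of_flow (hm : 0 < m) (hu0 : u 0 = R)
    (hrange : ∀ t ∈ Ico (0 : ℝ) δ, m < u t)
    (hode : ∀ t ∈ Ico (0 : ℝ) δ, HasDerivAt u (2 * exp (u t / m) * (u t - m)) t)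
    {t : ℝ} (ht : t ∈ Ico 0 δ) :
    exp (-u t / m) ≤ exp (-R / m) - 2 * (R - m) / m * t := by
  have h0 : (0 : ℝ) ∈ Ico 0 δ := ⟨le_rfl, ht.1.trans_lt ht.2⟩
  have hslope : ∀ s ∈ Ico (0 : ℝ) δ, -(2 * (u s - m) / m) ≤ -(2 * (R - m) / m) := fun s hs ↦ by
    have hRu : R ≤ u s := hu0 ▸ monotoneOn_of_flow hrange hode h0 hs hs.1
    gcongr
  have := (convex_Ico 0 δ).image_sub_le_mul_sub_of_hasDerivAt_le
    (fun s hs ↦ hasDerivAt_exp_neg_div_of_flow hm.ne' (hode s hs)) hslope h0 ht ht.1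
  rw [hu0] at this
  linarith

end Flow

/-- Explicit upper barrier for `e^{-u/m}` along the flow `u' = 2 e^{u/m}(u-m)`
when `u(0) = R₀² > m`; in particular the existence time is at most
`T₂ = m e^{-R₀²/m} / (2(R₀² - m))`. -/
theorem exp_barrier_above (m R0sq δ : ℝ) (hm : 0 < m) (hR0 : m < R0sq)
    (u : ℝ → ℝ) (hu0 : u 0 = R0sq) (hrange : ∀ t ∈ Ico (0 : ℝ) δ, m < u t)
    (hode : ∀ t ∈ Ico (0 : ℝ) δ, HasDerivAt u (2 * exp (u t / m) * (u t - m)) t) :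
    (∀ t ∈ Ico (0 : ℝ) δ,
      0 < exp (-u t / m) ∧
      exp (-u t / m) ≤ exp (-R0sq / m) - 2 * (R0sq - m) / m * t ∧
      u t ≥ -m * Real.log (exp (-R0sq / m) - 2 * (R0sq - m) / m * t)) ∧
    δ ≤ m / (2 * (R0sq - m)) * exp (-R0sq / m) := by
  have hbarrier := fun t (ht : t ∈ Ico (0 : ℝ) δ) ↦ exp_neg_div_le_of_flow hm hu0 hrange hode ht
  refine ⟨fun t ht ↦ ⟨exp_pos _, hbarrier t ht, ?_⟩, ?_⟩
  · have hlog := (le_log_iff_exp_le ((exp_pos _).trans_le (hbarrier t ht))).2 (hbarrier t ht)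
    rw [div_le_iff₀ hm] at hlog
    linarith
  · by_contra! hδ
    have hT : 0 < m / (2 * (R0sq - m)) * exp (-R0sq / m) :=
      mul_pos (div_pos hm (by linarith)) (exp_pos _)
    have hline := (exp_pos _).trans_le (hbarrier _ ⟨hT.le, hδ⟩)
    have hzero : 2 * (R0sq - m) / m * (m / (2 * (R0sq - m)) * exp (-R0sq / m))
        = exp (-R0sq / m) := by
      field_simp [(sub_pos.2 hR0).ne']
    linarith
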